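/- arXiv:2402.03644 — 2 statements merged into one kernel-verified Lean document; each statement's English description precedes it below -/
import Mathlib

section
/- Let d^{AS}_n be the number of even derangements of {1,...,n}. Then d^{AS}_1 = 0 and for all n ≥ 2, d^{AS}_n = n·d^{AS}_{n-1} + ((-1)^{n-1}/2)·(n-2)(n+1). -/
/-!
By the Leibniz formula, the signed count of derangements of an `n`-element set is
`det (J - 1) = (-1)^n det (1 - J)`, where `J = u uᵀ` is the all-ones matrix, so it equals
`(-1)^n (1 - uᵀ u) = (-1)^n (1 - n)`. Hence twice the number of even derangements is
`D n + (-1)^n (1 - n)`, with `D n` the number of all derangements, and the recursion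
`D (n+1) = (n+1) D n - (-1)^n` turns this into the stated recursion.
-/

open Finset

/-- The number of even derangements of `{1,…,n}`: fixed-point-free permutations of sign `+1`. -/
def dAS (n : ℕ) : ℕ :=
  (Finset.univ.filter fun σ : Equiv.Perm (Fin n) =>
    (∀ i, σ i ≠ i) ∧ Equiv.Perm.sign σ = 1).card

open Equiv Matrix

variable {α : Type*} [Fintype α] [DecidableEq α]

lemma Matrix.det_of_one_sub_one (R : Type*) [CommRing R] :
    det ((of fun _ _ => 1 : Matrix α α R) - 1) =
      (-1) ^ Fintype.card α * (1 - (Fintype.card α : R)) := by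
  have hrank_one : (of fun _ _ => 1 : Matrix α α R) =
      replicateCol (Fin 1) (fun _ : α => (1 : R)) * replicateRow (Fin 1) (fun _ : α => (1 : R)) := by
    ext i j
    simp [Matrix.mul_apply]
  rw [← neg_sub, det_neg, hrank_one, det_one_sub_mul_comm, det_unique]
  simp [Matrix.mul_apply]

lemma Equiv.Perm.sum_sign_derangements :
    ∑ σ ∈ univ.filter (fun σ : Perm α => ∀ i, σ i ≠ i), (Perm.sign σ : ℤ) =
      (-1) ^ Fintype.card α * (1 - Fintype.card α) := by
  rw [← Matrix.det_of_one_sub_one, det_apply, sum_filter]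
  refine sum_congr rfl fun σ _ => ?_
  have hentry (i : α) :
      ((of fun _ _ => 1 : Matrix α α ℤ) - 1) (σ i) i = if σ i ≠ i then 1 else 0 := by
    by_cases h : σ i = i <;> simp [h]
  simp only [hentry, prod_boole, mem_univ, true_implies]
  split_ifs <;> simp [Units.smul_def]

lemma Equiv.Perm.two_mul_card_filter_sign_eq_one (s : Finset (Perm α)) :
    (2 * #(s.filter (Perm.sign · = 1)) : ℤ) = #s + ∑ σ ∈ s, (Perm.sign σ : ℤ) := by
  rw [card_filter, card_eq_sum_ones]
  push_cast
  rw [mul_sum, ← sum_add_distrib]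
  refine sum_congr rfl fun σ _ => ?_
  rcases Int.units_eq_one_or (Perm.sign σ) with h | h <;> simp [h]

lemma Equiv.Perm.card_filter_derangements :
    #(univ.filter fun σ : Perm α => ∀ i, σ i ≠ i) = numDerangements (Fintype.card α) := by
  rw [← card_derangements_eq_numDerangements, Fintype.card_subtype]
  rfl

lemma Equiv.Perm.two_mul_card_even_derangements :
    (2 * #(univ.filter fun σ : Perm α => (∀ i, σ i ≠ i) ∧ Perm.sign σ = 1) : ℤ) =
      numDerangements (Fintype.card α) + (-1) ^ Fintype.card α * (1 - Fintype.card α) := by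
  rw [← filter_filter, two_mul_card_filter_sign_eq_one, card_filter_derangements,
    sum_sign_derangements]

lemma two_mul_dAS (n : ℕ) : (2 * dAS n : ℤ) = numDerangements n + (-1) ^ n * (1 - n) := by
  rw [dAS]
  -- `dAS` decides `∀ i` by `Nat.decidableForallFin`, not the generic `Fintype` instance.
  convert Perm.two_mul_card_even_derangements (α := Fin n) <;> simp

lemma dAS_succ (m : ℕ) :
    (dAS (m + 1) : ℚ) = (m + 1) * dAS m + ((-1) ^ m / 2) * (m - 1) * (m + 2) := by
  have hcount (k : ℕ) : (2 * dAS k : ℚ) = numDerangements k + (-1) ^ k * (1 - k) := by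
    exact_mod_cast two_mul_dAS k
  have hrec : (numDerangements (m + 1) : ℚ) = (m + 1) * numDerangements m - (-1) ^ m := by
    exact_mod_cast numDerangements_succ m
  have hnext := hcount (m + 1)
  push_cast at hnext
  linear_combination (1 / 2 : ℚ) * hnext - ((m + 1 : ℚ) / 2) * hcount m + (1 / 2 : ℚ) * hrec

theorem stmt9 :
    dAS 1 = 0 ∧
    ∀ n : ℕ, 2 ≤ n →
      (dAS n : ℚ) = (n : ℚ) * (dAS (n - 1) : ℚ) +
        ((-1 : ℚ) ^ (n - 1) / 2) * ((n : ℚ) - 2) * ((n : ℚ) + 1) := by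
  refine ⟨by simpa using two_mul_dAS 1, fun n hn => ?_⟩
  obtain ⟨m, rfl⟩ : ∃ m, n = m + 1 := ⟨n - 1, by omega⟩
  rw [dAS_succ, Nat.add_sub_cancel]
  push_cast
  ring
end

section
/- Let d^{AB}_n be the number of signed derangements in B_n of even type-B length. Then d^{AB}_1 = 0 and for all n ≥ 2, d^{AB}_n = 2n·d^{AB}_{n-1} + (-1)^n(n+1). -/
open Finset

/-- `w : Fin n → ℤ` is a signed permutation of `{1,…,n}`: the absolute values of its
entries form a permutation of `{1,…,n}`. -/
def isSignedPerm (n : ℕ) (w : Fin n → ℤ) : Prop :=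
  (∀ i, 1 ≤ (w i).natAbs ∧ (w i).natAbs ≤ n) ∧
    Function.Injective fun i => (w i).natAbs

/-- The inversion number of the word `w`, with respect to the usual order on `ℤ`. -/
def invW (n : ℕ) (w : Fin n → ℤ) : ℕ :=
  ((Finset.univ : Finset (Fin n × Fin n)).filter fun p => p.1 < p.2 ∧ w p.2 < w p.1).card

/-- The type-`B` length: `ℓ_B(w) = inv(w) - ∑_{i : w_i < 0} w_i`. -/
def lenB (n : ℕ) (w : Fin n → ℤ) : ℤ :=
  (invW n w : ℤ) - ∑ i ∈ Finset.univ.filter (fun i : Fin n => w i < 0), w i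

/-- `w` is a signed derangement: no entry satisfies `w_i = i` (in 1-indexed notation). -/
def isDerang (n : ℕ) (w : Fin n → ℤ) : Prop :=
  ∀ i : Fin n, w i ≠ ((i : ℕ) : ℤ) + 1

/-- The number of signed derangements in the hyperoctahedral group `B_n` whose
type-`B` length is even. -/
noncomputable def dAB (n : ℕ) : ℕ :=
  Set.ncard {w : Fin n → ℤ |
    isSignedPerm n w ∧ isDerang n w ∧ Even (lenB n w)}

/-!
Encode a signed permutation as a pair (permutation of absolute values, set of negative
positions). Inclusion–exclusion over the positions `i` with `w i = i` gives the number of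
signed derangements as `D n = ∑ j, (-1)^j C(n,j) (n-j)! 2^(n-j)`, whence
`D (n+1) = 2 (n+1) D n + (-1)^(n+1)`.

Negating one entry `w i` changes the parity of `ℓ_B`: exactly `|w i| - 1` pairs change their
inversion status, while the sum of the negative entries changes by `|w i|`. Negating the
first entry at which `w` differs from `w₀ = (-1, …, -n)` is therefore a parity-reversing
involution on the signed derangements other than `w₀`; it stays a derangement because
`w i ≠ i`. Since `ℓ_B(w₀) = n²`, the even and odd signed derangements differ in number by
`(-1)^n`, so `2 d^{AB}_n = D n + (-1)^n`, and the recurrence for `D` becomes the claimed one.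
-/

lemma Finset.card_filter_add_card_filter_eq {β : Type*} (s : Finset β) (p q : β → Prop)
    [DecidablePred p] [DecidablePred q] :
    #(s.filter p) + #(s.filter q) =
      2 * #(s.filter fun x => p x ∧ q x) + #(s.filter fun x => ¬(p x ↔ q x)) := by
  simp only [card_filter, mul_sum, ← sum_add_distrib]
  refine sum_congr rfl fun x _ => ?_
  by_cases p x <;> by_cases q x <;> simp [*]

lemma Nat.succ_choose_mul_factorial_sub {n j : ℕ} (hj : j ≤ n) :
    (n + 1).choose j * (n + 1 - j).factorial = (n + 1) * (n.choose j * (n - j).factorial) := by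
  rw [show n + 1 - j = n - j + 1 by omega, Nat.factorial_succ, ← mul_assoc, ← mul_assoc,
    ← show n + 1 - j = n - j + 1 by omega, ← Nat.choose_mul_succ_eq]
  ring

section Counting

variable {α : Type*} [Fintype α] [DecidableEq α]

lemma card_perm_fixing (T : Finset α) :
    #{π : Equiv.Perm α | ∀ i ∈ T, π i = i} = (Fintype.card α - #T).factorial := by
  have e : Equiv.Perm {i // i ∉ T} ≃ {π : Equiv.Perm α // ∀ i ∈ T, π i = i} :=
    (Equiv.Perm.subtypeEquivSubtypePerm _).trans (Equiv.subtypeEquivRight fun π => by simp)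
  rw [← Fintype.card_subtype, ← Fintype.card_congr e, Fintype.card_perm,
    Fintype.card_subtype_compl, Fintype.card_coe]

lemma card_fun_eq_false_on (T : Finset α) :
    #{ε : α → Bool | ∀ i ∈ T, ε i = false} = 2 ^ (Fintype.card α - #T) := by
  have : ({ε : α → Bool | ∀ i ∈ T, ε i = false} : Finset _) =
      Fintype.piFinset fun i => if i ∈ T then {false} else univ := by
    ext ε
    simp only [mem_filter, mem_univ, true_and, Fintype.mem_piFinset]
    refine forall_congr' fun i => ?_
    split_ifs <;> simp_all
  rw [this, Fintype.card_piFinset]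
  simp [apply_ite, prod_ite, filter_notMem_eq_sdiff, ← compl_eq_univ_sdiff, card_compl]

def signedDerangementNum (n : ℕ) : ℤ :=
  ∑ j ∈ range (n + 1), (-1) ^ j * n.choose j * ((n - j).factorial * 2 ^ (n - j))

lemma signedDerangementNum_succ (n : ℕ) :
    signedDerangementNum (n + 1) = 2 * (n + 1) * signedDerangementNum n + (-1) ^ (n + 1) := by
  rw [signedDerangementNum, sum_range_succ, signedDerangementNum, mul_sum]
  simp only [Nat.choose_self, Nat.sub_self, Nat.factorial_zero, pow_zero, Nat.cast_one, mul_one]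
  congr 1
  refine sum_congr rfl fun j hj => ?_
  have hj : j ≤ n := Nat.lt_succ_iff.mp (mem_range.mp hj)
  have key := congrArg (Nat.cast : ℕ → ℤ) (Nat.succ_choose_mul_factorial_sub hj)
  push_cast at key
  rw [show n + 1 - j = n - j + 1 by omega, pow_succ] at *
  linear_combination (-1) ^ j * 2 ^ (n - j) * 2 * key

variable (α) in
def signedDerangementPairs : Finset (Equiv.Perm α × (α → Bool)) :=
  univ.filter fun p => ∀ i, p.1 i = i → p.2 i = true

lemma card_signedDerangementPairs :
    (#(signedDerangementPairs α) : ℤ) = signedDerangementNum (Fintype.card α) := by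
  set N := Fintype.card α
  let S : α → Finset (Equiv.Perm α × (α → Bool)) := fun i => {p | p.1 i = i ∧ p.2 i = false}
  have hcompl : signedDerangementPairs α = univ.inf fun i => (S i)ᶜ := by
    ext p
    simp [signedDerangementPairs, mem_inf, S]
  have hinf (T : Finset α) : #(T.inf S) = (N - #T).factorial * 2 ^ (N - #T) := by
    have : T.inf S = ({π : Equiv.Perm α | ∀ i ∈ T, π i = i} : Finset _) ×ˢ
        ({ε : α → Bool | ∀ i ∈ T, ε i = false} : Finset _) := by
      ext p
      simp [mem_inf, S, forall_and]
    rw [this, card_product, card_perm_fixing, card_fun_eq_false_on]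
  rw [hcompl, inclusion_exclusion_card_inf_compl]
  simp_rw [hinf]
  rw [sum_powerset_apply_card (fun m => (-1 : ℤ) ^ m * ((N - m).factorial * 2 ^ (N - m) : ℕ)),
    card_univ, signedDerangementNum]
  refine sum_congr rfl fun j _ => ?_
  push_cast
  ring

end Counting

section SignedWords

variable {n : ℕ}

def signedWord (p : Equiv.Perm (Fin n) × (Fin n → Bool)) (i : Fin n) : ℤ :=
  if p.2 i then -(((p.1 i : ℕ) : ℤ) + 1) else ((p.1 i : ℕ) : ℤ) + 1

lemma natAbs_signedWord (p : Equiv.Perm (Fin n) × (Fin n → Bool)) (i : Fin n) :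
    (signedWord p i).natAbs = p.1 i + 1 := by
  unfold signedWord; split_ifs <;> omega

lemma signedWord_neg_iff (p : Equiv.Perm (Fin n) × (Fin n → Bool)) (i : Fin n) :
    signedWord p i < 0 ↔ p.2 i = true := by
  unfold signedWord; split_ifs with h <;> simp [h] <;> omega

lemma signedWord_injective : Function.Injective (signedWord (n := n)) := by
  intro p q h
  have hperm : p.1 = q.1 := Equiv.ext fun i => Fin.ext <| by
    simpa [natAbs_signedWord] using congrArg Int.natAbs (congrFun h i)
  have hsign : p.2 = q.2 := funext fun i => by
    simpa [signedWord_neg_iff] using congrArg (· < 0) (congrFun h i)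
  exact Prod.ext hperm hsign

lemma isSignedPerm_signedWord (p : Equiv.Perm (Fin n) × (Fin n → Bool)) :
    isSignedPerm n (signedWord p) := by
  refine ⟨fun i => ?_, fun i j h => ?_⟩
  · have := (p.1 i).isLt
    rw [natAbs_signedWord]; omega
  · simp only [natAbs_signedWord, Nat.add_right_cancel_iff, Fin.val_inj] at h
    exact p.1.injective h

lemma isSignedPerm.exists_signedWord_eq {w : Fin n → ℤ} (hw : isSignedPerm n w) :
    ∃ p, signedWord p = w := by
  let π : Fin n → Fin n := fun i => ⟨(w i).natAbs - 1, by have := hw.1 i; omega⟩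
  have hπ : π.Injective := fun i j h => hw.2 <| by
    have := hw.1 i; have := hw.1 j; simp only [π, Fin.mk.injEq] at h; dsimp only; omega
  refine ⟨(Equiv.ofBijective π hπ.bijective_of_finite, fun i => decide (w i < 0)), ?_⟩
  funext i
  have := (hw.1 i).1
  simp only [signedWord, Equiv.ofBijective_apply, π, decide_eq_true_eq]
  split_ifs <;> omega

lemma isDerang_signedWord_iff (p : Equiv.Perm (Fin n) × (Fin n → Bool)) :
    isDerang n (signedWord p) ↔ ∀ i, p.1 i = i → p.2 i = true := by
  refine forall_congr' fun i => ?_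
  rw [← Fin.val_inj]
  unfold signedWord
  split_ifs with h
  · simp [h]; omega
  · simp [h]

end SignedWords

def signedDerangements (n : ℕ) : Finset (Fin n → ℤ) :=
  (signedDerangementPairs (Fin n)).map ⟨signedWord, signedWord_injective⟩

lemma mem_signedDerangements {n : ℕ} {w : Fin n → ℤ} :
    w ∈ signedDerangements n ↔ isSignedPerm n w ∧ isDerang n w := by
  simp only [signedDerangements, signedDerangementPairs, mem_map, mem_filter, mem_univ, true_and,
    Function.Embedding.coeFn_mk]
  constructor
  · rintro ⟨p, hp, rfl⟩
    exact ⟨isSignedPerm_signedWord p, (isDerang_signedWord_iff p).2 hp⟩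
  · rintro ⟨hw, hd⟩
    obtain ⟨p, rfl⟩ := hw.exists_signedWord_eq
    exact ⟨p, (isDerang_signedWord_iff p).1 hd, rfl⟩

lemma card_signedDerangements (n : ℕ) :
    (#(signedDerangements n) : ℤ) = signedDerangementNum n := by
  rw [signedDerangements, card_map, card_signedDerangementPairs, Fintype.card_fin]

lemma dAB_eq_card_filter (n : ℕ) :
    dAB n = #{w ∈ signedDerangements n | Even (lenB n w)} := by
  rw [dAB, ← Set.ncard_coe_finset]
  congr 1
  ext w
  simp [mem_signedDerangements, and_assoc]

def negAt {ι : Type*} [DecidableEq ι] (w : ι → ℤ) (i : ι) : ι → ℤ :=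
  Function.update w i (-w i)

lemma negAt_negAt {ι : Type*} [DecidableEq ι] (w : ι → ℤ) (i : ι) :
    negAt (negAt w i) i = w := by
  simp [negAt]

section Parity

variable {n : ℕ} {w : Fin n → ℤ}

lemma isSignedPerm_negAt (hw : isSignedPerm n w) (i : Fin n) : isSignedPerm n (negAt w i) := by
  have habs : (fun j => (negAt w i j).natAbs) = fun j => (w j).natAbs := by
    funext j
    by_cases hj : j = i
    · subst hj; simp [negAt]
    · simp [negAt, Function.update_of_ne hj]
  refine ⟨fun j => ?_, ?_⟩
  · simpa using congrFun habs j ▸ hw.1 j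
  · rw [habs]; exact hw.2

lemma isSignedPerm.card_filter_natAbs_lt (hw : isSignedPerm n w) (i : Fin n) :
    #{j | (w j).natAbs < (w i).natAbs} = (w i).natAbs - 1 := by
  have himage : univ.image (fun j => (w j).natAbs) = Icc 1 n := by
    refine eq_of_subset_of_card_le (fun a ha => ?_) ?_
    · obtain ⟨j, -, rfl⟩ := mem_image.mp ha
      exact mem_Icc.mpr (hw.1 j)
    · rw [card_image_of_injective _ hw.2]; simp
  calc #{j | (w j).natAbs < (w i).natAbs}
      = #((univ.filter fun j => (w j).natAbs < (w i).natAbs).image fun j => (w j).natAbs) :=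
        (card_image_of_injective _ hw.2).symm
    _ = #(Ico 1 (w i).natAbs) := by
        rw [← filter_image (p := (· < (w i).natAbs)), himage]
        congr 1
        ext a
        have := hw.1 i
        simp only [mem_filter, mem_Icc, mem_Ico]
        omega
    _ = (w i).natAbs - 1 := Nat.card_Ico _ _

lemma inversion_toggle_iff (hw : Function.Injective fun j => (w j).natAbs) (i : Fin n)
    (p : Fin n × Fin n) :
    ¬((p.1 < p.2 ∧ w p.2 < w p.1) ↔ (p.1 < p.2 ∧ negAt w i p.2 < negAt w i p.1)) ↔
      p.1 < p.2 ∧ (p.1 = i ∧ (w p.2).natAbs < (w i).natAbs ∨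
        p.2 = i ∧ (w p.1).natAbs < (w i).natAbs) := by
  have habs : ∀ j, j ≠ i → (w j).natAbs ≠ (w i).natAbs := fun j hj h => hj (hw h)
  obtain ⟨j, k⟩ := p
  dsimp only
  by_cases hjk : j < k
  · have hkj : k ≠ j := hjk.ne'
    by_cases hj : j = i
    · subst hj
      have := habs k hkj
      simp only [negAt, Function.update_self, Function.update_of_ne hkj, hjk, hkj, true_and]
      omega
    · by_cases hk : k = i
      · subst hk
        have := habs j hj
        simp only [negAt, Function.update_self, Function.update_of_ne hj, hjk, hj, true_and]
        omega
      · simp [negAt, hj, hk]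
  · simp [hjk]

lemma card_inversion_toggles (hw : Function.Injective fun j => (w j).natAbs) (i : Fin n) :
    #{p : Fin n × Fin n | ¬((p.1 < p.2 ∧ w p.2 < w p.1) ↔
        (p.1 < p.2 ∧ negAt w i p.2 < negAt w i p.1))} =
      #{j | (w j).natAbs < (w i).natAbs} := by
  refine card_nbij' (fun p => if p.1 = i then p.2 else p.1)
    (fun j => if j < i then (j, i) else (i, j)) ?_ ?_ ?_ ?_
  all_goals
    intro p hp
    simp only [coe_filter, Set.mem_ofPred_eq, mem_univ, true_and, inversion_toggle_iff hw]
      at hp ⊢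
    grind

lemma sum_neg_add_sum_neg_negAt (i : Fin n) :
    ∑ j ∈ univ.filter (fun j => w j < 0), w j +
        ∑ j ∈ univ.filter (fun j => negAt w i j < 0), negAt w i j =
      2 * ∑ j ∈ {i}ᶜ, (if w j < 0 then w j else 0) - (w i).natAbs := by
  simp only [sum_filter]
  rw [Fintype.sum_eq_add_sum_compl i,
    Fintype.sum_eq_add_sum_compl i (fun j => if negAt w i j < 0 then _ else _)]
  have hrest : ∑ j ∈ {i}ᶜ, (if negAt w i j < 0 then negAt w i j else 0) =
      ∑ j ∈ {i}ᶜ, (if w j < 0 then w j else 0) :=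
    sum_congr rfl fun j hj => by rw [negAt, Function.update_of_ne (by simpa using hj)]
  rw [hrest, negAt, Function.update_self]
  split_ifs <;> omega

lemma odd_lenB_add_lenB_negAt (hw : isSignedPerm n w) (i : Fin n) :
    Odd (lenB n w + lenB n (negAt w i)) := by
  have hinv := card_filter_add_card_filter_eq univ
    (fun p : Fin n × Fin n => p.1 < p.2 ∧ w p.2 < w p.1)
    (fun p => p.1 < p.2 ∧ negAt w i p.2 < negAt w i p.1)
  rw [card_inversion_toggles hw.2, hw.card_filter_natAbs_lt] at hinv
  have hneg := sum_neg_add_sum_neg_negAt (w := w) i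
  have hpos := (hw.1 i).1
  unfold lenB invW
  rw [Int.odd_iff]
  omega

end Parity

def negIdentity (n : ℕ) (i : Fin n) : ℤ := -(((i : ℕ) : ℤ) + 1)

lemma negIdentity_mem_signedDerangements (n : ℕ) : negIdentity n ∈ signedDerangements n := by
  refine mem_signedDerangements.mpr ⟨⟨fun i => ?_, fun i j h => ?_⟩, fun i => ?_⟩
  · have := i.isLt; unfold negIdentity; omega
  · simp only [negIdentity] at h; omega
  · unfold negIdentity; omega

lemma card_filter_fst_lt_snd (n : ℕ) :
    #{p : Fin n × Fin n | p.1 < p.2} = ∑ k ∈ range n, k := by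
  rw [card_filter, Fintype.sum_prod_type_right, ← Fin.sum_univ_eq_sum_range]
  refine sum_congr rfl fun k _ => ?_
  rw [← card_filter, filter_gt_eq_Iio, Fin.card_Iio]

lemma lenB_negIdentity (n : ℕ) : lenB n (negIdentity n) = n ^ 2 := by
  have hinv : invW n (negIdentity n) = #{p : Fin n × Fin n | p.1 < p.2} := by
    unfold invW negIdentity
    congr 1
    ext p
    simp only [mem_filter, mem_univ, true_and, neg_lt_neg_iff, add_lt_add_iff_right,
      Nat.cast_lt, Fin.val_fin_lt]
    exact ⟨fun h => h.1, fun h => ⟨h, h⟩⟩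
  have hneg : ∑ i ∈ univ.filter (fun i : Fin n => negIdentity n i < 0), negIdentity n i =
      -∑ k ∈ range n, ((k : ℤ) + 1) := by
    rw [filter_true_of_mem fun i _ => by unfold negIdentity; omega, ← Fin.sum_univ_eq_sum_range,
      ← sum_neg_distrib]
    rfl
  rw [lenB, hinv, card_filter_fst_lt_snd, hneg, sub_neg_eq_add]
  push_cast
  clear hinv hneg
  induction n with
  | zero => simp
  | succ m ih => rw [sum_range_succ, sum_range_succ, ← add_add_add_comm, ih]; push_cast; ring

section Involution

variable {n : ℕ}

def disagreements (w : Fin n → ℤ) : Finset (Fin n) := {j | w j ≠ negIdentity n j}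

lemma mem_disagreements {w : Fin n → ℤ} {j : Fin n} :
    j ∈ disagreements w ↔ w j ≠ negIdentity n j := by
  simp [disagreements]

def negFirstDisagreement (w : Fin n → ℤ) : Fin n → ℤ :=
  if h : (disagreements w).Nonempty then negAt w ((disagreements w).min' h) else w

lemma disagreements_nonempty {w : Fin n → ℤ} (hw : w ≠ negIdentity n) :
    (disagreements w).Nonempty := by
  contrapose! hw
  funext j
  simpa [mem_disagreements] using eq_empty_iff_forall_notMem.mp hw j

lemma disagreements_negAt {w : Fin n → ℤ} (hd : isDerang n w) {i : Fin n}
    (hi : i ∈ disagreements w) : disagreements (negAt w i) = disagreements w := by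
  ext j
  by_cases hj : j = i
  · subst hj
    have := hd j
    simp only [mem_disagreements, negAt, Function.update_self, negIdentity] at hi ⊢
    omega
  · rw [mem_disagreements, mem_disagreements, negAt, Function.update_of_ne hj]

lemma negFirstDisagreement_spec {w : Fin n → ℤ} (hw : w ∈ signedDerangements n)
    (hw₀ : w ≠ negIdentity n) :
    negFirstDisagreement w ∈ (signedDerangements n).erase (negIdentity n) ∧
      negFirstDisagreement (negFirstDisagreement w) = w ∧
      Odd (lenB n w + lenB n (negFirstDisagreement w)) := by
  obtain ⟨hs, hd⟩ := mem_signedDerangements.mp hw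
  have hne := disagreements_nonempty hw₀
  set i := (disagreements w).min' hne
  have hi : i ∈ disagreements w := min'_mem _ _
  have hflip : negFirstDisagreement w = negAt w i := dif_pos hne
  have hsame := disagreements_negAt hd hi
  have hd' : isDerang n (negAt w i) := by
    intro j
    by_cases hj : j = i
    · subst hj
      rw [mem_disagreements, negIdentity] at hi
      rw [negAt, Function.update_self]; omega
    · rw [negAt, Function.update_of_ne hj]; exact hd j
  refine ⟨?_, ?_, hflip ▸ odd_lenB_add_lenB_negAt hs i⟩
  · rw [hflip, mem_erase]
    refine ⟨fun h => ?_, mem_signedDerangements.mpr ⟨isSignedPerm_negAt hs i, hd'⟩⟩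
    rw [← hsame, h, mem_disagreements] at hi
    exact hi rfl
  · rw [hflip, negFirstDisagreement, dif_pos (hsame ▸ hne)]
    simp_rw [hsame]
    exact negAt_negAt w i

end Involution

lemma sum_sign_lenB_signedDerangements (n : ℕ) :
    ∑ w ∈ signedDerangements n, (if Even (lenB n w) then 1 else -1 : ℤ) = (-1) ^ n := by
  have hcancel : ∑ w ∈ (signedDerangements n).erase (negIdentity n),
      (if Even (lenB n w) then 1 else -1 : ℤ) = 0 := by
    have spec := fun w (hw : w ∈ (signedDerangements n).erase (negIdentity n)) =>
      negFirstDisagreement_spec (mem_of_mem_erase hw) (ne_of_mem_erase hw)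
    refine sum_involution (fun w _ => negFirstDisagreement w) (fun w hw => ?_)
      (fun w hw _ hfix => ?_) (fun w hw => (spec w hw).1) (fun w hw => (spec w hw).2.1)
    · have := Int.odd_add.mp (spec w hw).2.2
      split_ifs <;> simp_all [← Int.not_even_iff_odd]
    · have := (spec w hw).2.2
      rw [hfix, ← two_mul] at this
      exact Int.not_even_iff_odd.mpr this (even_two_mul _)
  rw [← add_sum_erase _ _ (negIdentity_mem_signedDerangements n), hcancel, add_zero,
    lenB_negIdentity]
  rcases Nat.even_or_odd n with h | h
  · simp [h.neg_one_pow, Int.even_pow, h]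
  · simp [h.neg_one_pow, Int.even_pow, Nat.not_even_iff_odd.mpr h]

lemma two_mul_dAB (n : ℕ) : 2 * (dAB n : ℤ) = signedDerangementNum n + (-1) ^ n := by
  rw [← card_signedDerangements, ← sum_sign_lenB_signedDerangements, sum_ite, sum_const,
    sum_const, dAB_eq_card_filter, ← card_filter_add_card_filter_not
      (s := signedDerangements n) (fun w => Even (lenB n w))]
  push_cast
  ring

theorem stmt12 :
    dAB 1 = 0 ∧
    ∀ n : ℕ, 2 ≤ n →
      (dAB n : ℤ) = 2 * (n : ℤ) * (dAB (n - 1) : ℤ) + (-1 : ℤ) ^ n * ((n : ℤ) + 1) := by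
  refine ⟨?_, fun n _ => ?_⟩
  · have h := two_mul_dAB 1
    norm_num [signedDerangementNum, sum_range_succ] at h
    exact_mod_cast h
  · obtain ⟨m, rfl⟩ : ∃ m, n = m + 1 := ⟨n - 1, by omega⟩
    have hsucc := two_mul_dAB (m + 1)
    have hprev := two_mul_dAB m
    rw [signedDerangementNum_succ] at hsucc
    rw [Nat.add_sub_cancel]
    push_cast
    refine mul_left_cancel₀ two_ne_zero ?_
    linear_combination hsucc - 2 * (m + 1) * hprev
end
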